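/- Let k be an algebraically closed field of characteristic zero, d ≥ 2 a natural number, and F a subgroup of the symmetric group of Fin d such that for any two 2-element subsets A, B of Fin d there exists σ ∈ F with σ(A) = B. Let G be the subgroup of GL(Fin d → k) consisting of all linear automorphisms g for which there exist σ ∈ F and t : Fin d → kˣ with g(e_i) = t(i) · e_{σ(i)} for all i, where (e_i) is the standard basis of Fin d → k. Then the representation of G on the exterior square ⋀²(Fin d → k), where g ∈ G acts by the induced map x ∧ y ↦ g(x) ∧ g(y), is irreducible. -/

import Mathlib

/-!
The diagonal torus acts on `e_i ∧ e_j` through the character `t_i t_j`. Let `g_a` scale `e_a` by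
`2` and fix the other basis vectors. Then `P_a = g_a - 1` acts on `e_i ∧ e_j` (`i ≠ j`) by `1` if
`a ∈ {i, j}` and by `0` otherwise, so for `a ≠ b` the operator `P_a P_b` projects `⋀²` onto the line
through `e_a ∧ e_b`, and `∑_{a ≠ b} P_a P_b = 2` on `⋀²`. Hence a nonzero subspace stable under the
torus contains some `e_a ∧ e_b`, and `2`-homogeneity of `F` moves it to `± e_i ∧ e_j` for every
pair `i ≠ j`; these span `⋀²`.
-/

namespace SmallRep

open ExteriorAlgebra Finset

section Wedge

variable {R n : Type*} [CommRing R] [DecidableEq n]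

variable (R) in
noncomputable def wedge (i j : n) : ExteriorAlgebra R (n → R) :=
  ι R (Pi.single i 1) * ι R (Pi.single j 1)

theorem wedge_mem_exteriorPower_two (i j : n) : wedge R i j ∈ ⋀[R]^2 (n → R) := by
  rw [exteriorPower, pow_two]
  exact Submodule.mul_mem_mul (LinearMap.mem_range_self _ _) (LinearMap.mem_range_self _ _)

theorem wedge_self (i : n) : wedge R i i = 0 :=
  ι_sq_zero _

theorem wedge_swap (i j : n) : wedge R j i = -wedge R i j :=
  eq_neg_of_add_eq_zero_left (ι_add_mul_swap _ _)

theorem wedge_mem_iff_of_pair_eq {U : Submodule R (ExteriorAlgebra R (n → R))} {a b i j : n}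
    (h : ({a, b} : Finset n) = {i, j}) : wedge R a b ∈ U ↔ wedge R i j ∈ U := by
  have h' : ({a, b} : Set n) = {i, j} := by simpa using congrArg ((↑) : Finset n → Set n) h
  rcases Set.pair_eq_pair_iff.1 h' with ⟨rfl, rfl⟩ | ⟨rfl, rfl⟩
  · rfl
  · rw [wedge_swap, neg_mem_iff]

theorem span_wedge [Fintype n] :
    Submodule.span R (Set.range fun p : n × n => wedge R p.1 p.2) = ⋀[R]^2 (n → R) := by
  have hι : LinearMap.range (ι R) =
      Submodule.span R (Set.range fun i => ι R (Pi.single i (1 : R) : n → R)) := by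
    rw [LinearMap.range_eq_map, ← (Pi.basisFun R n).span_eq, Submodule.map_span, ← Set.range_comp]
    simp [Function.comp_def]
  rw [exteriorPower, hι, pow_two, Submodule.span_mul_span, ← Set.image2_mul, Set.image2_range]
  rfl

theorem wedge_ne_zero [Nontrivial R] {i j : n} (h : i ≠ j) : wedge R i j ≠ 0 := by
  have hwedge : (exteriorPower.ιMulti R 2 ![(Pi.single i 1 : n → R), Pi.single j 1] :
      ExteriorAlgebra R (n → R)) = wedge R i j := by
    simp [ιMulti_apply, wedge]
  have hdet : exteriorPower.pairingDual R (n → R) 2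
      (exteriorPower.ιMulti R 2 ![LinearMap.proj i, LinearMap.proj j])
      (exteriorPower.ιMulti R 2 ![Pi.single i 1, Pi.single j 1]) = 1 := by
    rw [exteriorPower.pairingDual_ιMulti_ιMulti, Matrix.det_fin_two]
    simp [h, h.symm]
  intro h0
  rw [← hwedge, ZeroMemClass.coe_eq_zero] at h0
  simp [h0] at hdet

theorem map_wedge_of_single {g : (n → R) →ₗ[R] (n → R)} {σ : n → n} {c : n → R}
    (hg : ∀ i, g (Pi.single i 1) = c i • Pi.single (σ i) 1) (i j : n) :
    map g (wedge R i j) = (c i * c j) • wedge R (σ i) (σ j) := by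
  rw [wedge, map_mul, map_apply_ι, map_apply_ι, hg, hg, map_smul, map_smul, smul_mul_smul_comm,
    wedge]

variable (R) in
noncomputable def monomialEquiv (σ : Equiv.Perm n) (t : n → Rˣ) : (n → R) ≃ₗ[R] (n → R) :=
  (LinearEquiv.piCongrRight fun i => LinearEquiv.smulOfUnit (t i)).trans
    (LinearEquiv.funCongrLeft R R σ.symm)

theorem monomialEquiv_single (σ : Equiv.Perm n) (t : n → Rˣ) (i : n) :
    monomialEquiv R σ t (Pi.single i 1) = (t i : R) • Pi.single (σ i) 1 := by
  ext j
  by_cases h : j = σ i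
  · subst h
    simp [monomialEquiv, LinearEquiv.funCongrLeft_apply, LinearEquiv.smulOfUnit, Units.smul_def]
  · simp [monomialEquiv, LinearEquiv.funCongrLeft_apply, Equiv.symm_apply_eq, h]

theorem exteriorPower_two_le_of_forall_wedge_mem [Fintype n]
    {U : Submodule R (ExteriorAlgebra R (n → R))} (hU : ∀ i j, i ≠ j → wedge R i j ∈ U) :
    ⋀[R]^2 (n → R) ≤ U := by
  rw [← span_wedge, Submodule.span_le]
  rintro _ ⟨⟨i, j⟩, rfl⟩
  rcases eq_or_ne i j with rfl | hij
  · simp [wedge_self]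
  · exact hU i j hij

end Wedge

section WeightOperator

variable {k n : Type*} [Field k] [NeZero (2 : k)] [DecidableEq n]

variable (k) in
noncomputable def weightOp (a : n) : Module.End k (ExteriorAlgebra k (n → k)) :=
  (map (monomialEquiv k 1 (Pi.mulSingle a (Units.mk0 2 two_ne_zero))).toLinearMap).toLinearMap - 1

theorem weightOp_wedge (a i j : n) :
    weightOp k a (wedge k i j) = (if a ∈ ({i, j} : Finset n) then 1 else 0 : k) • wedge k i j := by
  rcases eq_or_ne i j with rfl | hij
  · simp [wedge_self]
  rw [weightOp, LinearMap.sub_apply, AlgHom.toLinearMap_apply,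
    map_wedge_of_single (monomialEquiv_single 1 _), Module.End.one_apply, Equiv.Perm.one_apply,
    Equiv.Perm.one_apply]
  by_cases hi : a = i
  · subst hi
    simp [hij.symm, two_smul]
  by_cases hj : a = j
  · subst hj
    simp [hij, two_smul]
  simp [hi, hj, Ne.symm hi, Ne.symm hj]

theorem weightOp_weightOp_wedge (a b i j : n) :
    weightOp k a (weightOp k b (wedge k i j)) =
      (if a ∈ ({i, j} : Finset n) ∧ b ∈ ({i, j} : Finset n) then 1 else 0 : k) • wedge k i j := by
  rw [weightOp_wedge, map_smul, weightOp_wedge, smul_smul, mul_comm, ite_zero_mul_ite_zero, one_mul]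

theorem sum_offDiag_weightOp_weightOp [Fintype n] {w : ExteriorAlgebra k (n → k)}
    (hw : w ∈ ⋀[k]^2 (n → k)) :
    ∑ p ∈ univ.offDiag, weightOp k p.1 (weightOp k p.2 w) = (2 : k) • w := by
  let L : Module.End k (ExteriorAlgebra k (n → k)) :=
    ∑ p ∈ univ.offDiag, weightOp k p.1 * weightOp k p.2
  suffices L w = ((2 : k) • 1 : Module.End k _) w by simpa [L] using this
  rw [← span_wedge] at hw
  refine LinearMap.eqOn_span ?_ hw
  rintro _ ⟨⟨i, j⟩, rfl⟩
  rcases eq_or_ne i j with rfl | hij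
  · simp [wedge_self]
  have hfilter : {p ∈ (univ : Finset n).offDiag | p.1 ∈ ({i, j} : Finset n) ∧
      p.2 ∈ ({i, j} : Finset n)} = ({i, j} : Finset n).offDiag := by
    ext
    simp only [mem_filter, mem_offDiag, mem_univ, true_and]
    tauto
  simp only [L, LinearMap.sum_apply, Module.End.mul_apply, weightOp_weightOp_wedge,
    ← Finset.sum_smul, Finset.sum_boole, hfilter, offDiag_card, card_pair hij]
  simp

theorem weightOp_weightOp_mem_span [Fintype n] {a b : n} (hab : a ≠ b)
    {w : ExteriorAlgebra k (n → k)} (hw : w ∈ ⋀[k]^2 (n → k)) :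
    weightOp k a (weightOp k b w) ∈ k ∙ wedge k a b := by
  rw [← span_wedge] at hw
  induction hw using Submodule.span_induction with
  | mem _ h =>
    obtain ⟨⟨i, j⟩, rfl⟩ := h
    rw [weightOp_weightOp_wedge]
    split_ifs with h
    · have hpair : ({a, b} : Finset n) = {i, j} :=
        eq_of_subset_of_card_le (insert_subset_iff.2 ⟨h.1, singleton_subset_iff.2 h.2⟩)
          (by rw [card_pair hab]; exact card_le_two)
      exact Submodule.smul_mem _ _
        ((wedge_mem_iff_of_pair_eq hpair).1 (Submodule.mem_span_singleton_self _))
    · rw [zero_smul]; exact zero_mem _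
  | zero => simp
  | add x y _ _ hx hy => rw [map_add, map_add]; exact add_mem hx hy
  | smul c x _ hx => rw [map_smul, map_smul]; exact Submodule.smul_mem _ c hx

theorem exists_wedge_mem_of_forall_diagonal_mem [Fintype n]
    {U : Submodule k (ExteriorAlgebra k (n → k))} (hU : U ≤ ⋀[k]^2 (n → k)) (hU0 : U ≠ ⊥)
    (hdiag : ∀ t : n → kˣ, ∀ w ∈ U, map (monomialEquiv k 1 t).toLinearMap w ∈ U) :
    ∃ a b, a ≠ b ∧ wedge k a b ∈ U := by
  obtain ⟨w, hwU, hw0⟩ := (Submodule.ne_bot_iff U).1 hU0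
  have hweightOp : ∀ a, ∀ v ∈ U, weightOp k a v ∈ U := fun a v hv => sub_mem (hdiag _ v hv) hv
  obtain ⟨⟨a, b⟩, hpair, hne⟩ := exists_ne_zero_of_sum_ne_zero
    (sum_offDiag_weightOp_weightOp (hU hwU) ▸ smul_ne_zero two_ne_zero hw0)
  have hab : a ≠ b := (mem_offDiag.1 hpair).2.2
  obtain ⟨c, hc⟩ := Submodule.mem_span_singleton.1 (weightOp_weightOp_mem_span hab (hU hwU))
  have hc0 : c ≠ 0 := by rintro rfl; simp [← hc] at hne
  refine ⟨a, b, hab, (U.smul_mem_iff hc0).1 ?_⟩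
  rw [hc]
  exact hweightOp a _ (hweightOp b w hwU)

end WeightOperator

theorem monomial_group_exterior_square_irreducible_general
    (k : Type*) [Field k] [CharZero k] (d : ℕ) (hd : 2 ≤ d)
    (F : Subgroup (Equiv.Perm (Fin d)))
    (h2hom : ∀ A B : Finset (Fin d), A.card = 2 → B.card = 2 → ∃ σ ∈ F, A.image σ = B) :
    (⋀[k]^2 (Fin d → k)) ≠ ⊥ ∧
    ∀ U : Submodule k (ExteriorAlgebra k (Fin d → k)), U ≤ ⋀[k]^2 (Fin d → k) →
      (∀ g : (Fin d → k) ≃ₗ[k] (Fin d → k),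
        (∃ σ ∈ F, ∃ t : Fin d → kˣ,
          ∀ i : Fin d, g (Pi.single i (1 : k)) = (t i : k) • (Pi.single (σ i) (1 : k) : Fin d → k)) →
        ∀ w ∈ U, ExteriorAlgebra.map g.toLinearMap w ∈ U) →
      U = ⊥ ∨ U = ⋀[k]^2 (Fin d → k) := by
  refine ⟨(Submodule.ne_bot_iff _).2 ⟨wedge k ⟨0, by omega⟩ ⟨1, by omega⟩,
    wedge_mem_exteriorPower_two _ _, wedge_ne_zero (by simp [Fin.ext_iff])⟩, fun U hU hinv => ?_⟩
  rcases eq_or_ne U ⊥ with hU0 | hU0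
  · exact .inl hU0
  have hmonomial : ∀ σ ∈ F, ∀ t, ∀ w ∈ U, map (monomialEquiv k σ t).toLinearMap w ∈ U :=
    fun σ hσ t => hinv _ ⟨σ, hσ, t, monomialEquiv_single σ t⟩
  obtain ⟨a, b, hab, hwab⟩ :=
    exists_wedge_mem_of_forall_diagonal_mem hU hU0 (hmonomial 1 F.one_mem)
  refine .inr (le_antisymm hU (exteriorPower_two_le_of_forall_wedge_mem fun i j hij => ?_))
  obtain ⟨σ, hσ, himage⟩ := h2hom {a, b} {i, j} (card_pair hab) (card_pair hij)
  have hσwab := hmonomial σ hσ 1 _ hwab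
  rw [map_wedge_of_single (monomialEquiv_single σ 1), Pi.one_apply, Pi.one_apply, Units.val_one,
    mul_one, one_smul] at hσwab
  rw [image_insert, image_singleton] at himage
  exact (wedge_mem_iff_of_pair_eq himage).1 hσwab

/-- Let `F` be a `2`-homogeneous subgroup of the symmetric group on `Fin d` (`d ≥ 2`) and
let `G` be the group of monomial linear automorphisms of `k^d` over `F`, i.e. those `g`
with `g(e_i) = t_i · e_{σ(i)}` for some `σ ∈ F` and scalars `t_i ∈ kˣ`. Then the induced
representation of `G` on the exterior square `⋀²(k^d)` is irreducible. -/
theorem monomial_group_exterior_square_irreducible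
    (k : Type*) [Field k] [IsAlgClosed k] [CharZero k] (d : ℕ) (hd : 2 ≤ d)
    (F : Subgroup (Equiv.Perm (Fin d)))
    (h2hom : ∀ A B : Finset (Fin d), A.card = 2 → B.card = 2 → ∃ σ ∈ F, A.image σ = B) :
    (⋀[k]^2 (Fin d → k)) ≠ ⊥ ∧
    ∀ U : Submodule k (ExteriorAlgebra k (Fin d → k)), U ≤ ⋀[k]^2 (Fin d → k) →
      (∀ g : (Fin d → k) ≃ₗ[k] (Fin d → k),
        (∃ σ ∈ F, ∃ t : Fin d → kˣ,
          ∀ i : Fin d, g (Pi.single i (1 : k)) = (t i : k) • (Pi.single (σ i) (1 : k) : Fin d → k)) →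
        ∀ w ∈ U, ExteriorAlgebra.map g.toLinearMap w ∈ U) →
      U = ⊥ ∨ U = ⋀[k]^2 (Fin d → k) :=
  monomial_group_exterior_square_irreducible_general k d hd F h2hom

end SmallRep
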